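/- For every positive integer k there exist two distinct binary strings of length 2^k that have the same k-deck; consequently S(k) ≤ 2^k, where S(k) is the smallest positive integer n such that there exist two distinct binary strings of length n with the same k-deck. Concretely, the pair can be constructed recursively: starting from x^(1) = (0,1), y^(1) = (1,0), set x^(k) = x^(k−1)y^(k−1) and y^(k) = y^(k−1)x^(k−1) (the Morse–Thue construction); then x^(k) ≠ y^(k) and x^(k), y^(k) have the same k-deck. -/
import Mathlib


/-- The multiset of all `s`-gapped subsequences of a binary string (all lengths,
including the empty subsequence), counted with multiplicity over index choices:
consecutive chosen indices must differ by at least `s`. -/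
def gappedSubseqs (s : ℕ) : List Bool → Multiset (List Bool)
  | [] => {[]}
  | a :: l => gappedSubseqs s l + (gappedSubseqs s (l.drop (s - 1))).map (a :: ·)
termination_by x => x.length
decreasing_by
  · simp
  · simp only [List.length_drop, List.length_cons]; omega

/-- The `s`-gapped `k`-deck: all `s`-gapped subsequences of length between 1 and `k`. -/
def gDeck (s k : ℕ) (x : List Bool) : Multiset (List Bool) :=
  (gappedSubseqs s x).filter (fun w => 1 ≤ w.length ∧ w.length ≤ k)

/-- The exact `s`-gapped `k`-deck: all `s`-gapped subsequences of length exactly `k`. -/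
def dDeck (s k : ℕ) (x : List Bool) : Multiset (List Bool) :=
  (gappedSubseqs s x).filter (fun w => w.length = k)

/-- The classical (ungapped) `k`-deck: the multiset of all length-`k` subsequences. -/
def deck (k : ℕ) (x : List Bool) : Multiset (List Bool) :=
  (gappedSubseqs 1 x).filter (fun w => w.length = k)

/-- The gapped `k`-deck `B^(k)` (gap `2`). -/
def Bdeck (k : ℕ) (x : List Bool) : Multiset (List Bool) := gDeck 2 k x

/-- `B_L^(k)`: the gapped `k`-deck of the string punctured on the left. -/
def BLdeck (k : ℕ) (x : List Bool) : Multiset (List Bool) := Bdeck k x.tail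

/-- `B_R^(k)`: the gapped `k`-deck of the string punctured on the right. -/
def BRdeck (k : ℕ) (x : List Bool) : Multiset (List Bool) := Bdeck k x.dropLast

/-- `B_LR^(k)`: the gapped `k`-deck of the string punctured on both ends. -/
def BLRdeck (k : ℕ) (x : List Bool) : Multiset (List Bool) := Bdeck k x.tail.dropLast

/-- `S(k)`: the smallest positive `n` such that two distinct binary strings of
length `n` share the same `k`-deck. -/
noncomputable def Sval (k : ℕ) : ℕ :=
  sInf {n | 0 < n ∧ ∃ x y : List Bool, x.length = n ∧ y.length = n ∧ x ≠ y ∧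
    deck k x = deck k y}

/-- `G(k)`: the smallest positive `n` such that two distinct binary strings of
length `n` share the same gapped `k`-deck. -/
noncomputable def Gval (k : ℕ) : ℕ :=
  sInf {n | 0 < n ∧ ∃ x y : List Bool, x.length = n ∧ y.length = n ∧ x ≠ y ∧
    Bdeck k x = Bdeck k y}

/-- `G_s(k)`: the smallest positive `n` such that two distinct binary strings of
length `n` share the same `s`-gapped `k`-deck. -/
noncomputable def Gs (s k : ℕ) : ℕ :=
  sInf {n | 0 < n ∧ ∃ x y : List Bool, x.length = n ∧ y.length = n ∧ x ≠ y ∧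
    gDeck s k x = gDeck s k y}

/-- `G*(k)`: the smallest positive `n` such that two distinct binary strings of
length `n` share the same gapped `k`-deck, also after puncturing on the left,
right and both sides. -/
noncomputable def Gstar (k : ℕ) : ℕ :=
  sInf {n | 0 < n ∧ ∃ x y : List Bool, x.length = n ∧ y.length = n ∧ x ≠ y ∧
    Bdeck k x = Bdeck k y ∧ BLdeck k x = BLdeck k y ∧
    BRdeck k x = BRdeck k y ∧ BLRdeck k x = BLRdeck k y}

mutual
/-- Morse-Thue string `x^(k+1)` (index shifted: `mtX 0 = x^(1) = (0,1)`). -/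
def mtX : ℕ → List Bool
  | 0 => [false, true]
  | k + 1 => mtX k ++ mtY k
/-- Morse-Thue string `y^(k+1)` (index shifted: `mtY 0 = y^(1) = (1,0)`). -/
def mtY : ℕ → List Bool
  | 0 => [true, false]
  | k + 1 => mtY k ++ mtX k
end

mutual
/-- Padded Morse-Thue string `x^(k+1)` (index shifted: `px 0 = x^(1) = (0,0,1,0)`). -/
def px : ℕ → List Bool
  | 0 => [false, false, true, false]
  | k + 1 => [false] ++ px k ++ [false, false] ++ py k ++ [false]
/-- Padded Morse-Thue string `y^(k+1)` (index shifted: `py 0 = y^(1) = (0,1,0,0)`). -/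
def py : ℕ → List Bool
  | 0 => [false, true, false, false]
  | k + 1 => [false] ++ py k ++ [false, false] ++ px k ++ [false]
end

/-- Interleaving `(z₁,x₁,z₂,x₂,…,z_{k-1},x_{k-1},z_k)` of `z` and `x`
(used with `|z| = |x| + 1`). -/
def interleave : List Bool → List Bool → List Bool
  | z, [] => z
  | [], _ :: _ => []
  | a :: l, b :: m => a :: b :: interleave l m

/-- `N(w, p)`: the number of occurrences of the wildcard string `w`
(entries `none` are wildcards `J`, `some b` is a letter of `Γ = {X, Y}`)
as a subsequence of `p`, each wildcard matching either letter. -/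
def Nw : List (Option Bool) → List Bool → ℕ
  | [], _ => 1
  | _ :: _, [] => 0
  | a :: w, b :: p =>
      Nw (a :: w) p + if a = none ∨ a = some b then Nw w p else 0

/-- `U_r(k)`: wildcard strings of length between `r` and `k` with exactly `r`
non-wildcard symbols. -/
def Ur (r k : ℕ) : Set (List (Option Bool)) :=
  {w | r ≤ w.length ∧ w.length ≤ k ∧ w.countP (fun a => a.isSome) = r}

/-- `U(k₁, k₂) = U₁(k₁) ∪ U₂(k₂)`. -/
def Uset (k1 k2 : ℕ) : Set (List (Option Bool)) := Ur 1 k1 ∪ Ur 2 k2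

/-- `p ∼^{U(k₁,k₂)} q`: `N(w,p) = N(w,q)` for all `w ∈ U(k₁,k₂)`. -/
def equivU (k1 k2 : ℕ) (p q : List Bool) : Prop :=
  ∀ w ∈ Uset k1 k2, Nw w p = Nw w q

/-- `S_U(k₁,k₂)`: the smallest `m` for which two distinct strings
`p, q ∈ Γ^m` satisfy `p ∼^{U(k₁,k₂)} q`. -/
noncomputable def SU (k1 k2 : ℕ) : ℕ :=
  sInf {m | ∃ p q : List Bool, p.length = m ∧ q.length = m ∧ p ≠ q ∧
    equivU k1 k2 p q}

/-- `h_{x,y}(p)`: replace each letter of `p` (`false = X`, `true = Y`) by `x`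
resp. `y` padded with one `0` at each end. -/
def hxy (x y : List Bool) (p : List Bool) : List Bool :=
  (p.map (fun b => [false] ++ (if b then y else x) ++ [false])).flatten

lemma g_nil : gappedSubseqs 1 [] = {[]} := by rw [gappedSubseqs]

lemma g_cons (a : Bool) (l : List Bool) :
    gappedSubseqs 1 (a :: l) = gappedSubseqs 1 l + (gappedSubseqs 1 l).map (a :: ·) := by
  rw [gappedSubseqs]; simp

lemma filter_bind (p : List Bool → Prop) [DecidablePred p] (m : Multiset (List Bool))
    (f : List Bool → Multiset (List Bool)) :
    (m.bind f).filter p = m.bind (fun a => (f a).filter p) := by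
  induction m using Multiset.induction with
  | empty => simp
  | cons a m ih => simp [Multiset.cons_bind, Multiset.filter_add, ih]

lemma g_append (x y : List Bool) :
    gappedSubseqs 1 (x ++ y) = (gappedSubseqs 1 x).bind (fun a => (gappedSubseqs 1 y).map (a ++ ·)) := by
  induction x with
  | nil => simp [g_nil, Multiset.singleton_bind]
  | cons a x ih =>
      rw [List.cons_append, g_cons, ih, g_cons, Multiset.add_bind]
      congr 1
      rw [Multiset.map_bind, Multiset.bind_map]
      apply Multiset.bind_congr (fun b _ => ?_)
      rw [Multiset.map_map]
      rfl

lemma sum_filter_len (m : Multiset (List Bool)) (j : ℕ) :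
    ∑ i ∈ Finset.range (j+1), m.filter (fun w => w.length = i)
      = m.filter (fun w => w.length ≤ j) := by
  induction j with
  | zero => simp
  | succ j ih =>
      rw [Finset.sum_range_succ, ih, Multiset.filter_add_filter]
      have h1 : m.filter (fun w => w.length ≤ j ∧ w.length = j + 1) = 0 :=
        Multiset.filter_eq_nil.2 (fun a _ h => by omega)
      rw [h1, add_zero]
      exact Multiset.filter_congr (fun a _ => by constructor <;> intro h <;> omega)

lemma sum_bind (s : Finset ℕ) (m : ℕ → Multiset (List Bool))
    (F : List Bool → Multiset (List Bool)) :
    (∑ i ∈ s, m i).bind F = ∑ i ∈ s, (m i).bind F := by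
  induction s using Finset.cons_induction with
  | empty => simp
  | cons a s ha ih => rw [Finset.sum_cons, Finset.sum_cons, Multiset.add_bind, ih]

lemma bind_filter (p : List Bool → Prop) [DecidablePred p] (m : Multiset (List Bool))
    (F : List Bool → Multiset (List Bool)) (h : ∀ a ∈ m, ¬ p a → F a = 0) :
    m.bind F = (m.filter p).bind F := by
  conv_lhs => rw [← Multiset.filter_add_not p m]
  rw [Multiset.add_bind]
  have : (m.filter (fun a => ¬ p a)).bind F = 0 := by
    rw [Multiset.bind_congr (g := fun _ => 0) (fun a ha => by
      rw [Multiset.mem_filter] at ha; exact h a ha.1 ha.2)]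
    simp
  rw [this, add_zero]

lemma deck_append (j : ℕ) (x y : List Bool) :
    deck j (x ++ y) = ∑ i ∈ Finset.range (j+1),
      (deck i x).bind (fun a => (deck (j-i) y).map (a ++ ·)) := by
  rw [deck, g_append, filter_bind]
  have step1 : ∀ a : List Bool,
      ((gappedSubseqs 1 y).map (a ++ ·)).filter (fun w => w.length = j)
        = ((gappedSubseqs 1 y).filter (fun b => a.length + b.length = j)).map (a ++ ·) := by
    intro a
    rw [Multiset.filter_map]
    congr 1
    exact Multiset.filter_congr (fun b _ => by simp)
  simp only [step1]
  rw [bind_filter (fun a => a.length ≤ j) _ _ (fun a _ h => by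
    rw [Multiset.filter_eq_nil.2 (fun b _ hb => by omega)]; simp)]
  rw [← sum_filter_len, sum_bind]
  apply Finset.sum_congr rfl
  intro i hi
  rw [Finset.mem_range] at hi
  apply Multiset.bind_congr
  intro a ha
  rw [Multiset.mem_filter] at ha
  congr 1
  rw [deck]
  exact Multiset.filter_congr (fun b _ => by rw [ha.2]; omega)

lemma deck_zero (x : List Bool) : deck 0 x = {[]} := by
  induction x with
  | nil => rw [deck, g_nil]; rfl
  | cons a l ih =>
      rw [deck, g_cons, Multiset.filter_add, ← deck, ih,
        Multiset.filter_eq_nil.2 (fun b hb => by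
          rw [Multiset.mem_map] at hb
          obtain ⟨c, _, rfl⟩ := hb
          simp)]
      simp

lemma C_right_nil (A : Multiset (List Bool)) :
    A.bind (fun a => Multiset.map (a ++ ·) {[]}) = A := by
  have : A.bind (fun a => ({id a} : Multiset (List Bool))) = A := by
    rw [Multiset.bind_singleton, Multiset.map_id]
  simpa using this

lemma peel {M : Type*} [AddCommMonoid M] (n : ℕ) (f : ℕ → M) :
    ∑ i ∈ Finset.range (n + 2), f i
      = f 0 + f (n + 1) + ∑ i ∈ Finset.range n, f (i + 1) := by
  rw [Finset.sum_range_succ, Finset.sum_range_succ']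
  abel

lemma C_left_nil (B : Multiset (List Bool)) :
    Multiset.bind {[]} (fun a => B.map (a ++ ·)) = B := by
  rw [Multiset.singleton_bind]; simp



lemma sameDeck : ∀ k : ℕ, ∀ j ≤ k + 1, deck j (mtX k) = deck j (mtY k) := by
  intro k
  induction k with
  | zero =>
      intro j hj
      interval_cases j
      · rw [deck_zero, deck_zero]
      · show deck 1 [false, true] = deck 1 [true, false]
        simp only [deck, g_cons, g_nil, Multiset.filter_add, Multiset.map_singleton,
          Multiset.map_add, Multiset.filter_singleton]
        norm_num [add_comm]
  | succ k ih =>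
      intro j hj
      rw [show mtX (k+1) = mtX k ++ mtY k from rfl,
          show mtY (k+1) = mtY k ++ mtX k from rfl,
          deck_append, deck_append]
      rcases Nat.lt_or_ge j (k + 2) with hlt | hge
      · apply Finset.sum_congr rfl
        intro i hi
        rw [Finset.mem_range] at hi
        rw [ih i (by omega), ih (j - i) (by omega)]
      · have hj2 : j = k + 2 := by omega
        subst hj2
        rw [show k + 2 + 1 = (k + 1) + 2 from rfl, peel, peel]
        have hmid : ∀ i ∈ Finset.range (k + 1),
            (deck (i+1) (mtX k)).bind (fun a => (deck (k+2-(i+1)) (mtY k)).map (a ++ ·))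
              = (deck (i+1) (mtY k)).bind (fun a => (deck (k+2-(i+1)) (mtX k)).map (a ++ ·)) := by
          intro i hi
          rw [Finset.mem_range] at hi
          rw [ih (i+1) (by omega), ih (k+2-(i+1)) (by omega)]
        rw [Finset.sum_congr rfl hmid]
        simp only [Nat.sub_self, Nat.sub_zero, deck_zero, C_right_nil, C_left_nil]
        abel

lemma mt_length : ∀ k : ℕ, (mtX k).length = 2 ^ (k + 1) ∧ (mtY k).length = 2 ^ (k + 1) := by
  intro k
  induction k with
  | zero => constructor <;> rfl
  | succ k ih =>
      refine ⟨?_, ?_⟩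
      · show (mtX k ++ mtY k).length = _
        rw [List.length_append, ih.1, ih.2, pow_succ]; ring
      · show (mtY k ++ mtX k).length = _
        rw [List.length_append, ih.1, ih.2, pow_succ]; ring

lemma mt_head : ∀ k : ℕ, (mtX k).head? = some false ∧ (mtY k).head? = some true := by
  intro k
  induction k with
  | zero => constructor <;> rfl
  | succ k ih =>
      constructor
      · show (mtX k ++ mtY k).head? = some false
        rw [List.head?_append_of_ne_nil]
        · exact ih.1
        · intro h; have := ih.1; rw [h] at this; simp at this
      · show (mtY k ++ mtX k).head? = some true
        rw [List.head?_append_of_ne_nil]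
        · exact ih.2
        · intro h; have := ih.2; rw [h] at this; simp at this

lemma mt_ne (k : ℕ) : mtX k ≠ mtY k := by
  intro h
  have h1 := (mt_head k).1
  have h2 := (mt_head k).2
  rw [h, h2] at h1
  simp at h1

/-- The Morse-Thue strings `x^(k)` and `y^(k)` are distinct, have
length `2^k`, and share the same `k`-deck; consequently `S(k) ≤ 2^k`. -/
theorem stmt2 (k : ℕ) (hk : 1 ≤ k) :
    mtX (k - 1) ≠ mtY (k - 1) ∧
    (mtX (k - 1)).length = 2 ^ k ∧ (mtY (k - 1)).length = 2 ^ k ∧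
    deck k (mtX (k - 1)) = deck k (mtY (k - 1)) ∧
    Sval k ≤ 2 ^ k := by
  obtain ⟨m, rfl⟩ : ∃ m, k = m + 1 := ⟨k - 1, by omega⟩
  simp only [Nat.add_sub_cancel]
  refine ⟨mt_ne m, (mt_length m).1, (mt_length m).2, sameDeck m (m+1) (by omega), ?_⟩
  apply Nat.sInf_le
  exact ⟨by positivity, mtX m, mtY m, (mt_length m).1, (mt_length m).2, mt_ne m,
    sameDeck m (m+1) (by omega)⟩
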